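/- arXiv:2503.03146 — 2 statements merged into one kernel-verified Lean document; each statement's English description precedes it below -/
import Mathlib

section
/- Online correctness of the FSS multiplication gate: let l be a positive natural number and work in ZMod (2^l). Let r¹, r², r_out ∈ ZMod (2^l) be input and output offsets, split as r¹ = r¹₀ + r¹₁, r² = r²₀ + r²₁, r_out = r_out₀ + r_out₁, and let q₀ + q₁ = r¹·r². For masked inputs x̂ = x + r¹ and ŷ = y + r², the sum of the two parties' local evaluations satisfies (0·x̂·ŷ − x̂·r²₀ − ŷ·r¹₀ + q₀ + r_out₀) + (1·x̂·ŷ − x̂·r²₁ − ŷ·r¹₁ + q₁ + r_out₁) = (x̂ − r¹)·(ŷ − r²) + r_out = x·y + r_out. -/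
/-- Online correctness of the FSS multiplication gate over `ZMod (2^l)`. -/
theorem fss_mul_gate_correct (l : ℕ) (hl : 0 < l)
    (x y r₁ r₂ rout r₁₀ r₁₁ r₂₀ r₂₁ rout₀ rout₁ q₀ q₁ : ZMod (2 ^ l))
    (hr₁ : r₁ = r₁₀ + r₁₁) (hr₂ : r₂ = r₂₀ + r₂₁) (hrout : rout = rout₀ + rout₁)
    (hq : q₀ + q₁ = r₁ * r₂)
    (xh yh : ZMod (2 ^ l)) (hxh : xh = x + r₁) (hyh : yh = y + r₂) :
    ((0 : ZMod (2 ^ l)) * xh * yh - xh * r₂₀ - yh * r₁₀ + q₀ + rout₀)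
        + ((1 : ZMod (2 ^ l)) * xh * yh - xh * r₂₁ - yh * r₁₁ + q₁ + rout₁)
      = (xh - r₁) * (yh - r₂) + rout
    ∧ (xh - r₁) * (yh - r₂) + rout = x * y + rout := by
  constructor
  · subst hr₁ hr₂ hrout; linear_combination hq
  · subst hxh hyh; ring
end

section
/- Online correctness of the FSS tensor-product (outer-product) gate: let l, N, M be positive natural numbers and work over ZMod (2^l). Let r¹ ∈ (ZMod (2^l))^N, r² ∈ (ZMod (2^l))^M, and r_out an N×M matrix over ZMod (2^l), split as r¹ = r¹₀ + r¹₁, r² = r²₀ + r²₁, r_out = r_out₀ + r_out₁, and let q₀ + q₁ = r¹ ⊗ r² (the N×M outer-product matrix with entries r¹ᵢ·r²ⱼ). For masked input vectors x̂ = x + r¹ and ŷ = y + r², the sum over b ∈ {0,1} of the local outputs b·(x̂ ⊗ ŷ) − x̂ ⊗ r²_b − r¹_b ⊗ ŷ + q_b + r_out_b equals (x̂ − r¹) ⊗ (ŷ − r²) + r_out = x ⊗ y + r_out. -/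
/-- Online correctness of the FSS tensor-product (outer-product) gate over `ZMod (2^l)`,
where `Matrix.vecMulVec v w` is the outer product with entries `v i * w j`. -/
theorem fss_tensor_product_gate_correct (l N M : ℕ) (hl : 0 < l) (hN : 0 < N) (hM : 0 < M)
    (x r₁ r₁₀ r₁₁ : Fin N → ZMod (2 ^ l))
    (y r₂ r₂₀ r₂₁ : Fin M → ZMod (2 ^ l))
    (rout rout₀ rout₁ q₀ q₁ : Matrix (Fin N) (Fin M) (ZMod (2 ^ l)))
    (hr₁ : r₁ = r₁₀ + r₁₁) (hr₂ : r₂ = r₂₀ + r₂₁) (hrout : rout = rout₀ + rout₁)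
    (hq : q₀ + q₁ = Matrix.vecMulVec r₁ r₂)
    (xh : Fin N → ZMod (2 ^ l)) (yh : Fin M → ZMod (2 ^ l))
    (hxh : xh = x + r₁) (hyh : yh = y + r₂) :
    (((0 : ZMod (2 ^ l)) • Matrix.vecMulVec xh yh - Matrix.vecMulVec xh r₂₀
          - Matrix.vecMulVec r₁₀ yh + q₀ + rout₀)
        + ((1 : ZMod (2 ^ l)) • Matrix.vecMulVec xh yh - Matrix.vecMulVec xh r₂₁
          - Matrix.vecMulVec r₁₁ yh + q₁ + rout₁))
      = Matrix.vecMulVec (xh - r₁) (yh - r₂) + rout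
    ∧ Matrix.vecMulVec (xh - r₁) (yh - r₂) + rout = Matrix.vecMulVec x y + rout := by
  subst hxh hyh hr₁ hr₂ hrout
  constructor
  · ext i j
    have hq' := congrFun (congrFun hq i) j
    simp only [Matrix.add_apply, Matrix.sub_apply, Matrix.smul_apply, Matrix.vecMulVec_apply,
      Pi.add_apply, smul_eq_mul] at hq' ⊢
    simp only [Pi.sub_apply, Pi.add_apply]
    linear_combination hq'
  · ext i j
    simp [Matrix.vecMulVec_apply]
end
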